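/- Let A be a positive compact operator on an infinite-dimensional separable Hilbert space, let R be a self-adjoint finite-rank operator such that A + R is positive, and let s > 0. If lim_{j→∞} j^{s} λ_j(A) = L (where λ_j denotes the nonincreasing eigenvalue sequence of a positive compact operator, counted with multiplicity), then lim_{j→∞} j^{s} λ_j(A + R) = L. -/

import Mathlib

/-!
Adding an operator of rank at most `N` to `T` moves every approximation number by at most `N`
places: `μ_{j+N}(T + R) ≤ μ_j(T)` because `S + R` has rank at most `j + N` whenever `S` has rank
at most `j`, and the same inequality for `T + R` and `-R` gives `μ_{j+N}(T) ≤ μ_j(T + R)`.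
Since `(j + N)^s / j^s → 1`, shifting the index by a fixed amount does not change the limit of
`j^s μ_j`, and the claim follows by squeezing.
-/

open Filter

/-- The `j`-th singular value of an operator, via the min-max (approximation number)
characterization: `μ_j(T) = inf { ‖T - R‖ : rank R ≤ j }`. For a positive compact operator
on a Hilbert space this is the `(j+1)`-th eigenvalue `λ_j` (counted with multiplicity,
arranged nonincreasingly). -/
noncomputable def singularValue {H : Type*} [NormedAddCommGroup H] [InnerProductSpace ℂ H]
    (T : H →L[ℂ] H) (j : ℕ) : ℝ :=
  sInf {c : ℝ | ∃ R : H →L[ℂ] H, LinearMap.rank (R : H →ₗ[ℂ] H) ≤ (j : Cardinal) ∧ c = ‖T - R‖}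

open Topology

section ApproximationNumbers

variable {H : Type*} [NormedAddCommGroup H] [InnerProductSpace ℂ H]

lemma bddBelow_singularValue_set (T : H →L[ℂ] H) (j : ℕ) :
    BddBelow {c : ℝ | ∃ R : H →L[ℂ] H, LinearMap.rank (R : H →ₗ[ℂ] H) ≤ (j : Cardinal) ∧
      c = ‖T - R‖} :=
  ⟨0, by rintro c ⟨S, -, rfl⟩; positivity⟩

lemma singularValue_add_le_of_rank_le {T P : H →L[ℂ] H} {N : ℕ}
    (hP : LinearMap.rank (P : H →ₗ[ℂ] H) ≤ N) (j : ℕ) :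
    singularValue (T + P) (j + N) ≤ singularValue T j := by
  refine le_csInf ⟨‖T‖, 0, by simp, by simp⟩ ?_
  rintro c ⟨S, hS, rfl⟩
  refine csInf_le (bddBelow_singularValue_set _ _) ⟨S + P, ?_, by congr 1; abel⟩
  calc LinearMap.rank ((S + P : H →L[ℂ] H) : H →ₗ[ℂ] H)
      ≤ LinearMap.rank (S : H →ₗ[ℂ] H) + LinearMap.rank (P : H →ₗ[ℂ] H) :=
        LinearMap.rank_add_le _ _
    _ ≤ j + N := add_le_add hS hP
    _ = ((j + N : ℕ) : Cardinal) := by push_cast; rfl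

lemma singularValue_le_add_of_rank_le {T P : H →L[ℂ] H} {N : ℕ}
    (hP : LinearMap.rank (P : H →ₗ[ℂ] H) ≤ N) (j : ℕ) :
    singularValue T (j + N) ≤ singularValue (T + P) j := by
  have hnegP : LinearMap.rank ((-P : H →L[ℂ] H) : H →ₗ[ℂ] H) ≤ N := by
    rwa [ContinuousLinearMap.toLinearMap_neg, LinearMap.rank, LinearMap.range_neg]
  simpa using singularValue_add_le_of_rank_le (T := T + P) hnegP j

end ApproximationNumbers

lemma tendsto_natCast_add_div_natCast_add_rpow (s : ℝ) (c d : ℕ) :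
    Tendsto (fun k : ℕ => (((k : ℝ) + c) / ((k : ℝ) + d)) ^ s) atTop (𝓝 1) := by
  have hbase : Tendsto (fun k : ℕ => ((k : ℝ) + c) / ((k : ℝ) + d)) atTop (𝓝 1) := by
    have hsmall : Tendsto (fun k : ℕ => ((c : ℝ) - d) / ((k : ℝ) + d)) atTop (𝓝 0) :=
      tendsto_const_nhds.div_atTop
        (tendsto_atTop_add_const_right _ _ tendsto_natCast_atTop_atTop)
    refine (by simpa using hsmall.const_add 1 : Tendsto _ _ (𝓝 (1 : ℝ))).congr' ?_
    filter_upwards [eventually_ge_atTop 1] with k hk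
    have : (0 : ℝ) < (k : ℝ) + d := by positivity
    field_simp
    ring
  simpa using hbase.rpow_const (p := s) (Or.inl one_ne_zero)

lemma Filter.Tendsto.add_natCast_rpow_mul_comp_add {a : ℕ → ℝ} {s L : ℝ} (c d : ℕ)
    (h : Tendsto (fun j : ℕ => (j : ℝ) ^ s * a j) atTop (𝓝 L)) :
    Tendsto (fun k : ℕ => ((k : ℝ) + c) ^ s * a (k + d)) atTop (𝓝 L) := by
  have hshift : Tendsto (fun k : ℕ => ((k : ℝ) + d) ^ s * a (k + d)) atTop (𝓝 L) := by
    simpa using (tendsto_add_atTop_iff_nat d).mpr h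
  refine (by simpa using (tendsto_natCast_add_div_natCast_add_rpow s c d).mul hshift :
    Tendsto _ _ (𝓝 L)).congr' ?_
  filter_upwards [eventually_ge_atTop 1] with k hk
  have hd : (0 : ℝ) < (k : ℝ) + d := by positivity
  rw [Real.div_rpow (by positivity) hd.le]
  field_simp [(Real.rpow_pos_of_pos hd s).ne']

lemma Filter.Tendsto.rpow_mul_of_shift_le {a b : ℕ → ℝ} {s L : ℝ} (N : ℕ)
    (hlo : ∀ j, a (j + N) ≤ b j) (hup : ∀ j, b (j + N) ≤ a j)
    (ha : Tendsto (fun j : ℕ => (j : ℝ) ^ s * a j) atTop (𝓝 L)) :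
    Tendsto (fun j : ℕ => (j : ℝ) ^ s * b j) atTop (𝓝 L) := by
  rw [← tendsto_add_atTop_iff_nat N]
  refine tendsto_of_tendsto_of_tendsto_of_le_of_le
    (ha.add_natCast_rpow_mul_comp_add N (N + N)) (ha.add_natCast_rpow_mul_comp_add N 0)
    (fun k => ?_) (fun k => ?_) <;> push_cast <;> gcongr
  · simpa only [add_assoc] using hlo (k + N)
  · exact hup k

theorem eigenvalue_asymptotics_finite_rank_perturbation_general
    {H : Type*} [NormedAddCommGroup H] [InnerProductSpace ℂ H]
    (A R : H →L[ℂ] H)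
    (hRrank : LinearMap.rank (R : H →ₗ[ℂ] H) < Cardinal.aleph0)
    (s : ℝ) (L : ℝ)
    (hL : Tendsto (fun j : ℕ => (j : ℝ) ^ s * singularValue A j) atTop (nhds L)) :
    Tendsto (fun j : ℕ => (j : ℝ) ^ s * singularValue (A + R) j) atTop (nhds L) := by
  obtain ⟨N, hN⟩ := Cardinal.lt_aleph0.mp hRrank
  exact hL.rpow_mul_of_shift_le N (singularValue_le_add_of_rank_le hN.le)
    (singularValue_add_le_of_rank_le hN.le)

theorem eigenvalue_asymptotics_finite_rank_perturbation
    {H : Type*} [NormedAddCommGroup H] [InnerProductSpace ℂ H] [CompleteSpace H]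
    [TopologicalSpace.SeparableSpace H] (hinf : ¬ FiniteDimensional ℂ H)
    (A R : H →L[ℂ] H) (hA : IsCompactOperator A) (hApos : A.IsPositive)
    (hRsa : IsSelfAdjoint R) (hRrank : LinearMap.rank (R : H →ₗ[ℂ] H) < Cardinal.aleph0)
    (hARpos : (A + R).IsPositive) (s : ℝ) (hs : 0 < s) (L : ℝ)
    (hL : Tendsto (fun j : ℕ => (j : ℝ) ^ s * singularValue A j) atTop (nhds L)) :
    Tendsto (fun j : ℕ => (j : ℝ) ^ s * singularValue (A + R) j) atTop (nhds L) :=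
  eigenvalue_asymptotics_finite_rank_perturbation_general A R hRrank s L hL
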